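/- Let c : ℕ → ℝ be defined by c(n) = 0 for n ≤ 3 and, for n ≥ 4, c(n) = c(⌊n/2⌋) + c(⌊n/2⌋ − 1) + (3/2)·n + (1/2)·(n mod 2). Then for every ε > 0 there exists N such that for all n ≥ N, c(n) ≥ (3/2 − ε)·n·log₂ n. (This function c(n) is the merge cost of Timsort on the worst-case run-length sequence R_tim(n), so Timsort's worst-case merge cost on inputs of length n is at least (1.5 − o(1))·n·log₂ n.) -/

import Mathlib

/-!
With `m = ⌊n/2⌋`, the shifted sizes `m + 3` and `m + 2` of the two subproblems are both at least
`(n + 3) / 2` and add up to at least `n + 3`, so `a (n + 3) log₂ (n + 3) - 12 a n` is a lower bound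
that propagates by strong induction: halving the argument of the logarithm costs `a (n + 3)`, which
the toll `a n` and the slack `12 a` (the unshifted sizes add up to at most `n - 1`) cover; the
constant `12` makes the bound hold for `n ≤ 3`. So `c n ≥ a n log₂ n - O(n)`, and `n = o(n log₂ n)`.
-/

open Real Filter

section HalvingRecurrence

variable {c : ℕ → ℝ} {a : ℝ}

theorem shifted_mul_logb_sub_le_of_halving_rec (ha : 0 ≤ a)
    (hbase : ∀ n, 1 ≤ n → n ≤ 3 → 0 ≤ c n)
    (hrec : ∀ n, 4 ≤ n → c (n / 2) + c (n / 2 - 1) + a * n ≤ c n) :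
    ∀ n : ℕ, 1 ≤ n → a * (n + 3) * logb 2 (n + 3) - 12 * a * n ≤ c n := by
  intro n
  induction n using Nat.strong_induction_on with
  | _ n ih =>
  intro hn1
  rcases le_or_gt n 3 with hn3 | hn4
  · have hn : (1 : ℝ) ≤ n := by exact_mod_cast hn1
    have hlog : logb 2 ((n : ℝ) + 3) ≤ 3 := by
      rw [logb_le_iff_le_rpow one_lt_two (by positivity)]
      have : (n : ℝ) ≤ 3 := by exact_mod_cast hn3
      norm_num; linarith
    have := hbase n hn1 hn3
    linarith [mul_le_mul_of_nonneg_left hlog (by positivity : 0 ≤ a * ((n : ℝ) + 3)),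
      mul_le_mul_of_nonneg_left hn ha]
  · set m := n / 2
    have ihm := ih m (by omega) (by omega)
    have ihm1 := ih (m - 1) (by omega) (by omega)
    rw [Nat.cast_sub (by omega : 1 ≤ m), Nat.cast_one] at ihm1
    have hmn : (n : ℝ) ≤ 2 * m + 1 := by exact_mod_cast (by omega : n ≤ 2 * m + 1)
    have hnm : 2 * (m : ℝ) ≤ n := by exact_mod_cast (by omega : 2 * m ≤ n)
    have hℓ_eq : logb 2 (((n : ℝ) + 3) / 2) = logb 2 ((n : ℝ) + 3) - 1 := by
      rw [logb_div (by positivity) two_ne_zero, logb_self_eq_one one_lt_two]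
    set ℓ := logb 2 (((n : ℝ) + 3) / 2)
    have hℓ_nonneg : 0 ≤ ℓ := logb_nonneg one_lt_two (by linarith)
    have hlogm : ℓ ≤ logb 2 ((m : ℝ) + 3) :=
      logb_le_logb_of_le one_lt_two (by positivity) (by linarith)
    have hlogm1 : ℓ ≤ logb 2 ((m : ℝ) - 1 + 3) :=
      logb_le_logb_of_le one_lt_two (by positivity) (by linarith)
    have hsum : a * (n + 3) * ℓ ≤ a * (m + 3) * logb 2 ((m : ℝ) + 3)
        + a * (m - 1 + 3) * logb 2 ((m : ℝ) - 1 + 3) := by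
      have h1 := mul_le_mul_of_nonneg_left hlogm (by positivity : 0 ≤ a * ((m : ℝ) + 3))
      have h2 := mul_le_mul_of_nonneg_left hlogm1 (by positivity : 0 ≤ a * ((m : ℝ) + 2))
      have h3 := mul_le_mul_of_nonneg_right
        (mul_le_mul_of_nonneg_left (by linarith : (n : ℝ) + 3 ≤ 2 * m + 5) ha) hℓ_nonneg
      linarith
    have := hrec n (by omega)
    rw [hℓ_eq] at hsum
    linarith [mul_le_mul_of_nonneg_left hnm ha]

theorem mul_logb_sub_le_of_halving_rec (ha : 0 ≤ a)
    (hbase : ∀ n, 1 ≤ n → n ≤ 3 → 0 ≤ c n)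
    (hrec : ∀ n, 4 ≤ n → c (n / 2) + c (n / 2 - 1) + a * n ≤ c n) (n : ℕ) (hn : 1 ≤ n) :
    a * n * logb 2 n - 12 * a * n ≤ c n := by
  have hn' : (1 : ℝ) ≤ n := by exact_mod_cast hn
  have hlog : logb 2 (n : ℝ) ≤ logb 2 ((n : ℝ) + 3) :=
    logb_le_logb_of_le one_lt_two (by positivity) (by linarith)
  have hmono := mul_le_mul hlog (by linarith : (n : ℝ) ≤ n + 3) (by positivity)
    (logb_nonneg one_lt_two (by linarith))
  linarith [shifted_mul_logb_sub_le_of_halving_rec ha hbase hrec n hn,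
    mul_le_mul_of_nonneg_left hmono ha]

end HalvingRecurrence

theorem exists_sub_mul_logb_le_of_mul_logb_sub_le {c : ℕ → ℝ} {a K : ℝ}
    (h : ∀ n : ℕ, 1 ≤ n → a * n * logb 2 n - K * n ≤ c n) :
    ∀ ε > (0 : ℝ), ∃ N : ℕ, ∀ n ≥ N, (a - ε) * n * logb 2 n ≤ c n := by
  intro ε hε
  have hlog : ∀ᶠ n : ℕ in atTop, K / ε ≤ logb 2 n :=
    ((tendsto_logb_atTop one_lt_two).comp tendsto_natCast_atTop_atTop).eventually_ge_atTop _
  obtain ⟨N, hN⟩ := eventually_atTop.mp (hlog.and (eventually_ge_atTop 1))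
  refine ⟨N, fun n hn => ?_⟩
  obtain ⟨hKL, hn1⟩ := hN n hn
  have hεL : K ≤ ε * logb 2 n := by rwa [div_le_iff₀' hε] at hKL
  have := mul_le_mul_of_nonneg_left hεL (Nat.cast_nonneg n)
  linarith [h n hn1]

theorem timsort_lower_bound (c : ℕ → ℝ)
    (h0 : ∀ n ≤ 3, c n = 0)
    (hrec : ∀ n, 4 ≤ n →
      c n = c (n / 2) + c (n / 2 - 1) + 3 / 2 * (n : ℝ) + 1 / 2 * ((n % 2 : ℕ) : ℝ)) :
    ∀ ε > (0 : ℝ), ∃ N : ℕ, ∀ n ≥ N, (3 / 2 - ε) * (n : ℝ) * Real.logb 2 n ≤ c n := by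
  have hrec' : ∀ n, 4 ≤ n → c (n / 2) + c (n / 2 - 1) + 3 / 2 * n ≤ c n := fun n hn => by
    rw [hrec n hn]
    linarith [(Nat.cast_nonneg (n % 2) : (0 : ℝ) ≤ (n % 2 : ℕ))]
  exact exists_sub_mul_logb_le_of_mul_logb_sub_le
    (mul_logb_sub_le_of_halving_rec (by norm_num) (fun n _ hn => (h0 n hn).ge) hrec')
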